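/- Let (g,g*) be a purely Hom-Lie bialgebra. Then g ⊕ g* equipped with the bracket [x+ξ, y+η]_⋈ = ([x,y]_g + 𝔞𝔡⋆_ξ y − 𝔞𝔡⋆_η x) + ([ξ,η]_{g*} + ad⋆_x η − ad⋆_y ξ), structure map φ ⊕ (φ⁻¹)*, and the symmetric bilinear form B(x+ξ, y+η) = ξ(y) + η(x), is a quadratic Hom-Lie algebra, and (g⊕g*; g, g*) is a Manin triple for Hom-Lie algebras. -/

import Mathlib

/-!
On `g ⊕ g*` the bracket is skew by construction, `φ ⊕ (φ⁻¹)*` is multiplicative because both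
coadjoint actions intertwine the structure maps, and the invariance of `B` comes from the
pairings that define the two coadjoint actions. The Jacobiator is trilinear and cyclically
symmetric, so it suffices to evaluate it on elements of `g` and `g*`: the pure cases are the
Hom-Jacobi identities of `g` and `g*`, and each mixed case splits into the representation property
of one coadjoint action and the cocycle condition on `Δ`, read in `g` or in `g*`.

Everything is computed by pairing with test vectors; since `φ_{g*} = (φ⁻¹)*`, every composite
`ξ ∘ φ^{±1}` becomes `φ_{g*}^{∓1} ξ`, which turns all these identities into Hom-Lie identities of
`g*` evaluated at points of `g`.
-/

open LinearMap Module

/-- A (regular, i.e. multiplicative with invertible structure map) Hom-Lie algebra. -/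
structure HomLieAlgebra (K g : Type*) [Field K] [AddCommGroup g] [Module K g] where
  bracket : g →ₗ[K] g →ₗ[K] g
  phi : g ≃ₗ[K] g
  skew : ∀ x y, bracket x y = - bracket y x
  phi_bracket : ∀ x y, phi (bracket x y) = bracket (phi x) (phi y)
  jacobi : ∀ x y z,
    bracket (phi x) (bracket y z) + bracket (phi y) (bracket z x)
      + bracket (phi z) (bracket x y) = 0

variable {K g V : Type*} [Field K] [AddCommGroup g] [Module K g]
  [AddCommGroup V] [Module K V]

/-- `ρ` is a representation of the Hom-Lie algebra `L` on `V` with respect to `β`. -/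
def HomLieAlgebra.IsRep (L : HomLieAlgebra K g) (β : V ≃ₗ[K] V)
    (ρ : g →ₗ[K] V →ₗ[K] V) : Prop :=
  (∀ x u, ρ (L.phi x) (β u) = β (ρ x u)) ∧
  (∀ x y u, ρ (L.bracket x y) (β u) = ρ (L.phi x) (ρ y u) - ρ (L.phi y) (ρ x u))

variable [FiniteDimensional K g]

/-- The adjoint action of `x ∈ g` on `∧²g`, encoded on skew bilinear forms on `g*`. -/
def adExt (L : HomLieAlgebra K g) (x : g) (W : Dual K g → Dual K g → K)
    (ξ η : Dual K g) : K :=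
  W (ξ ∘ₗ L.bracket x) (η ∘ₗ L.phi.toLinearMap)
    + W (ξ ∘ₗ L.phi.toLinearMap) (η ∘ₗ L.bracket x)

/-- The coadjoint representation of `g` on `g*`:
`ad⋆_x η = ad*_{φ(x)}((φ⁻²)*(η))`, i.e. `⟨ad⋆_x η, y⟩ = −⟨η, φ⁻²([φ(x), y])⟩`. -/
def coadRep (L : HomLieAlgebra K g) (x : g) (η : Dual K g) : Dual K g :=
  - (η ∘ₗ L.phi.symm.toLinearMap ∘ₗ L.phi.symm.toLinearMap ∘ₗ L.bracket (L.phi x))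

/-- The coadjoint representation of `g*` on `g ≅ g**`:
`𝔞𝔡⋆_ξ y = 𝔞𝔡*_{(φ⁻¹)*(ξ)}(φ²(y))`, i.e. `⟨𝔞𝔡⋆_ξ y, β⟩ = −⟨φ²(y), [(φ⁻¹)*(ξ), β]_{g*}⟩`. -/
noncomputable def coadRepStar (L : HomLieAlgebra K g)
    (Lst : HomLieAlgebra K (Dual K g)) (ξ : Dual K g) (y : g) : g :=
  (evalEquiv K g).symm
    (- (Lst.bracket (ξ ∘ₗ L.phi.symm.toLinearMap)).dualMap (evalEquiv K g (L.phi (L.phi y))))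

/-- The double bracket `[x+ξ, y+η]_⋈` on `g ⊕ g*`. -/
noncomputable def dbBracket (L : HomLieAlgebra K g) (Lst : HomLieAlgebra K (Dual K g))
    (p q : g × Dual K g) : g × Dual K g :=
  (L.bracket p.1 q.1 + coadRepStar L Lst p.2 q.1 - coadRepStar L Lst q.2 p.1,
   Lst.bracket p.2 q.2 + coadRep L p.1 q.2 - coadRep L q.1 p.2)

/-- The structure map `φ ⊕ (φ⁻¹)*` on `g ⊕ g*`. -/
def dbPhi (L : HomLieAlgebra K g) (p : g × Dual K g) : g × Dual K g :=
  (L.phi p.1, p.2 ∘ₗ L.phi.symm.toLinearMap)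

/-- The canonical symmetric bilinear form `B(x+ξ, y+η) = ξ(y) + η(x)`. -/
def dbForm (p q : g × Dual K g) : K := p.2 q.1 + q.2 p.1

lemma eq_of_forall_dual_apply_eq (R : Type*) {M : Type*} [Field R] [AddCommGroup M] [Module R M]
    {u v : M} (h : ∀ β : Dual R M, β u = β v) : u = v :=
  eval_apply_injective R (LinearMap.ext h)

namespace HomLieAlgebra

variable {R A : Type*} [Field R] [AddCommGroup A] [Module R A] (L : HomLieAlgebra R A)

lemma phi_symm_bracket (x y : A) :
    L.phi.symm (L.bracket x y) = L.bracket (L.phi.symm x) (L.phi.symm y) := by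
  apply L.phi.injective
  simp [L.phi_bracket]

lemma leibniz (a b c : A) :
    L.bracket (L.phi a) (L.bracket b c)
      = L.bracket (L.bracket a b) (L.phi c) + L.bracket (L.phi b) (L.bracket a c) := by
  have h := L.jacobi a b c
  rw [L.skew c a, map_neg, L.skew (L.phi c)] at h
  rw [← sub_eq_zero, ← h]
  abel

end HomLieAlgebra

section CoadRep

variable {R A : Type*} [Field R] [AddCommGroup A] [Module R A] (L : HomLieAlgebra R A)

lemma coadRep_apply (x : A) (η : Dual R A) (w : A) :
    coadRep L x η w = - η (L.bracket (L.phi.symm x) (L.phi.symm (L.phi.symm w))) := by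
  simp [coadRep, L.phi_symm_bracket]

@[simp] lemma coadRep_zero_left (η : Dual R A) : coadRep L 0 η = 0 := by
  ext; simp [coadRep]

@[simp] lemma coadRep_zero_right (x : A) : coadRep L x 0 = 0 := by
  ext; simp [coadRep]

@[simp] lemma coadRep_neg_left (x : A) (η : Dual R A) :
    coadRep L (-x) η = - coadRep L x η := by
  ext; simp [coadRep]

@[simp] lemma coadRep_neg_right (x : A) (η : Dual R A) :
    coadRep L x (-η) = - coadRep L x η := by
  ext; simp [coadRep]

lemma coadRep_add_left (x x' : A) (η : Dual R A) :
    coadRep L (x + x') η = coadRep L x η + coadRep L x' η := by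
  ext; simp [coadRep]; ring

lemma coadRep_add_right (x : A) (η η' : Dual R A) :
    coadRep L x (η + η') = coadRep L x η + coadRep L x η' := by
  ext; simp [coadRep]; ring

lemma coadRep_comp_phi_symm (x : A) (η : Dual R A) :
    coadRep L x η ∘ₗ L.phi.symm.toLinearMap
      = coadRep L (L.phi x) (η ∘ₗ L.phi.symm.toLinearMap) := by
  ext w
  simp [coadRep_apply, L.phi_symm_bracket]

lemma coadRep_bracket (x y : A) (ζ : Dual R A) :
    coadRep L (L.bracket x y) (ζ ∘ₗ L.phi.symm.toLinearMap)
      = coadRep L (L.phi x) (coadRep L y ζ) - coadRep L (L.phi y) (coadRep L x ζ) := by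
  obtain ⟨a, rfl⟩ := (L.phi.trans L.phi).surjective x
  obtain ⟨b, rfl⟩ := (L.phi.trans L.phi).surjective y
  ext w
  obtain ⟨c, rfl⟩ := ((L.phi.trans L.phi).trans (L.phi.trans L.phi)).surjective w
  simp [coadRep_apply, L.phi_symm_bracket, L.leibniz a b]

end CoadRep

section DualInverse

variable {R A : Type*} [Field R] [AddCommGroup A] [Module R A]
  (L : HomLieAlgebra R A) (Lst : HomLieAlgebra R (Dual R A))

def IsDualInverse : Prop :=
  ∀ (ξ : Dual R A) (x : A), Lst.phi ξ x = ξ (L.phi.symm x)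

/-- `Δ[x,y] = ad_{φ⁻¹x} Δy − ad_{φ⁻¹y} Δx`, paired with `ξ ∧ η`. -/
def IsCobracketCocycle : Prop :=
  ∀ (x y : A) (ξ η : Dual R A),
    Lst.bracket ξ η (L.bracket x y)
      = adExt L (L.phi.symm x) (fun ξ' η' => Lst.bracket ξ' η' y) ξ η
        - adExt L (L.phi.symm y) (fun ξ' η' => Lst.bracket ξ' η' x) ξ η

variable {L Lst}

namespace IsDualInverse

variable (hphi : IsDualInverse L Lst)
include hphi

lemma apply_phi_symm (μ : Dual R A) (w : A) : μ (L.phi.symm w) = Lst.phi μ w :=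
  (hphi μ w).symm

lemma apply_phi (μ : Dual R A) (w : A) : μ (L.phi w) = Lst.phi.symm μ w := by
  simpa using hphi (Lst.phi.symm μ) (L.phi w)

lemma apply_bracket_phi (μ : Dual R A) (a b : A) :
    μ (L.bracket (L.phi a) (L.phi b)) = Lst.phi.symm μ (L.bracket a b) := by
  rw [← L.phi_bracket, hphi.apply_phi]

lemma comp_phi_symm (μ : Dual R A) : μ ∘ₗ L.phi.symm.toLinearMap = Lst.phi μ :=
  LinearMap.ext (hphi.apply_phi_symm μ)

lemma comp_phi (μ : Dual R A) : μ ∘ₗ L.phi.toLinearMap = Lst.phi.symm μ :=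
  LinearMap.ext (hphi.apply_phi μ)

lemma phi_comp_bracket (μ : Dual R A) (u : A) :
    Lst.phi (μ ∘ₗ L.bracket u) = Lst.phi μ ∘ₗ L.bracket (L.phi u) := by
  ext w
  simp [← hphi.apply_phi_symm, L.phi_symm_bracket]

lemma phi_symm_comp_bracket (μ : Dual R A) (u : A) :
    Lst.phi.symm (μ ∘ₗ L.bracket u) = Lst.phi.symm μ ∘ₗ L.bracket (L.phi.symm u) := by
  ext w
  simp [← hphi.apply_phi, L.phi_bracket]

lemma coadRep_eq (x : A) (η : Dual R A) :
    coadRep L x η = - (Lst.phi (Lst.phi η) ∘ₗ L.bracket (L.phi x)) := by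
  simp only [coadRep, ← hphi.comp_phi_symm, comp_assoc]

end IsDualInverse

end DualInverse

section CoadRepStar

variable (L : HomLieAlgebra K g) (Lst : HomLieAlgebra K (Dual K g))

lemma apply_coadRepStar (β ξ : Dual K g) (y : g) :
    β (coadRepStar L Lst ξ y)
      = - Lst.bracket (ξ ∘ₗ L.phi.symm.toLinearMap) β (L.phi (L.phi y)) := by
  simp [coadRepStar]

@[simp] lemma coadRepStar_zero_left (y : g) : coadRepStar L Lst 0 y = 0 :=
  eq_of_forall_dual_apply_eq K fun β => by simp [apply_coadRepStar]

@[simp] lemma coadRepStar_zero_right (ξ : Dual K g) : coadRepStar L Lst ξ 0 = 0 :=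
  eq_of_forall_dual_apply_eq K fun β => by simp [apply_coadRepStar]

@[simp] lemma coadRepStar_neg_left (ξ : Dual K g) (y : g) :
    coadRepStar L Lst (-ξ) y = - coadRepStar L Lst ξ y :=
  eq_of_forall_dual_apply_eq K fun β => by simp [apply_coadRepStar]

@[simp] lemma coadRepStar_neg_right (ξ : Dual K g) (y : g) :
    coadRepStar L Lst ξ (-y) = - coadRepStar L Lst ξ y :=
  eq_of_forall_dual_apply_eq K fun β => by simp [apply_coadRepStar]

lemma coadRepStar_add_left (ξ ξ' : Dual K g) (y : g) :
    coadRepStar L Lst (ξ + ξ') y = coadRepStar L Lst ξ y + coadRepStar L Lst ξ' y :=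
  eq_of_forall_dual_apply_eq K fun β => by simp [apply_coadRepStar, add_comp]; ring

lemma coadRepStar_add_right (ξ : Dual K g) (y y' : g) :
    coadRepStar L Lst ξ (y + y') = coadRepStar L Lst ξ y + coadRepStar L Lst ξ y' :=
  eq_of_forall_dual_apply_eq K fun β => by simp [apply_coadRepStar]; ring

variable {L Lst}

namespace IsDualInverse

variable (hphi : IsDualInverse L Lst)
include hphi

lemma apply_coadRepStar (β ξ : Dual K g) (y : g) :
    β (coadRepStar L Lst ξ y)
      = - Lst.bracket (Lst.phi.symm ξ) (Lst.phi.symm (Lst.phi.symm β)) y := by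
  simp [_root_.apply_coadRepStar, hphi.comp_phi_symm, hphi.apply_phi, Lst.phi_symm_bracket]

lemma apply_bracket_coadRepStar (β ξ : Dual K g) (u y : g) :
    β (L.bracket u (coadRepStar L Lst ξ y))
      = - Lst.bracket (Lst.phi.symm ξ) (Lst.phi.symm (Lst.phi.symm (β ∘ₗ L.bracket u))) y :=
  hphi.apply_coadRepStar (β ∘ₗ L.bracket u) ξ y

lemma apply_coadRepStar_bracket (β ξ : Dual K g) (y u : g) :
    β (L.bracket (coadRepStar L Lst ξ y) u)
      = Lst.bracket (Lst.phi.symm ξ) (Lst.phi.symm (Lst.phi.symm (β ∘ₗ L.bracket u))) y := by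
  rw [L.skew, map_neg, hphi.apply_bracket_coadRepStar, neg_neg]

lemma phi_coadRepStar (ξ : Dual K g) (y : g) :
    L.phi (coadRepStar L Lst ξ y) = coadRepStar L Lst (Lst.phi ξ) (L.phi y) :=
  eq_of_forall_dual_apply_eq K fun β => by
    simp [hphi.apply_phi, hphi.apply_coadRepStar, Lst.phi_symm_bracket]

lemma phi_symm_coadRepStar (ξ : Dual K g) (y : g) :
    L.phi.symm (coadRepStar L Lst ξ y) = coadRepStar L Lst (Lst.phi.symm ξ) (L.phi.symm y) := by
  rw [L.phi.symm_apply_eq, hphi.phi_coadRepStar]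
  simp

lemma coadRepStar_bracket (η ζ : Dual K g) (x : g) :
    coadRepStar L Lst (Lst.bracket η ζ) (L.phi x)
      = coadRepStar L Lst (η ∘ₗ L.phi.symm.toLinearMap) (coadRepStar L Lst ζ x)
        - coadRepStar L Lst (ζ ∘ₗ L.phi.symm.toLinearMap) (coadRepStar L Lst η x) :=
  eq_of_forall_dual_apply_eq K fun β => by
    have h := congr($(Lst.leibniz (Lst.phi.symm (Lst.phi.symm η)) (Lst.phi.symm (Lst.phi.symm ζ))
      (Lst.phi.symm (Lst.phi.symm (Lst.phi.symm (Lst.phi.symm β))))) x)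
    simp only [LinearEquiv.apply_symm_apply, LinearMap.add_apply] at h
    simp [hphi.apply_coadRepStar, hphi.comp_phi_symm, hphi.apply_phi, Lst.phi_symm_bracket]
    linear_combination h

end IsDualInverse

variable (hphi : IsDualInverse L Lst) (hcoc : IsCobracketCocycle L Lst)
include hphi hcoc

lemma coadRepStar_cocycle (x y : g) (ζ : Dual K g) :
    coadRepStar L Lst (ζ ∘ₗ L.phi.symm.toLinearMap) (L.bracket x y)
      = L.bracket (L.phi x) (coadRepStar L Lst ζ y) + coadRepStar L Lst (coadRep L y ζ) (L.phi x)
        - L.bracket (L.phi y) (coadRepStar L Lst ζ x)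
        - coadRepStar L Lst (coadRep L x ζ) (L.phi y) :=
  eq_of_forall_dual_apply_eq K fun β => by
    have h := hcoc x y ζ (Lst.phi.symm (Lst.phi.symm β))
    simp only [map_add, map_sub, hphi.apply_bracket_coadRepStar]
    simp [adExt, hphi.apply_coadRepStar, hphi.comp_phi_symm, hphi.comp_phi, hphi.apply_phi,
      Lst.phi_symm_bracket, hphi.coadRep_eq, hphi.phi_symm_comp_bracket] at h ⊢
    linear_combination -h

lemma coadRep_cocycle (x : g) (η ζ : Dual K g) :
    coadRep L (L.phi x) (Lst.bracket η ζ)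
      = Lst.bracket (η ∘ₗ L.phi.symm.toLinearMap) (coadRep L x ζ)
        + coadRep L (coadRepStar L Lst ζ x) (η ∘ₗ L.phi.symm.toLinearMap)
        - Lst.bracket (ζ ∘ₗ L.phi.symm.toLinearMap) (coadRep L x η)
        - coadRep L (coadRepStar L Lst η x) (ζ ∘ₗ L.phi.symm.toLinearMap) := by
  ext w
  obtain ⟨w, rfl⟩ := (L.phi.trans L.phi).surjective w
  have h := hcoc x w η ζ
  simp [adExt, hphi.coadRep_eq, hphi.apply_coadRepStar_bracket, hphi.comp_phi_symm, hphi.comp_phi,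
    hphi.apply_phi, hphi.phi_symm_coadRepStar, hphi.apply_phi_symm, Lst.phi_symm_bracket,
    Lst.phi_bracket, hphi.phi_symm_comp_bracket, hphi.phi_comp_bracket] at h ⊢
  rw [Lst.skew (η ∘ₗ _), Lst.skew (η ∘ₗ _)] at h
  simp only [LinearMap.neg_apply] at h
  linear_combination -h

end CoadRepStar

section DbPhi

variable {R A : Type*} [Field R] [AddCommGroup A] [Module R A] (L : HomLieAlgebra R A)

lemma dbPhi_add (p q : A × Dual R A) : dbPhi L (p + q) = dbPhi L p + dbPhi L q := by
  ext <;> simp [dbPhi, add_comp]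

lemma dbForm_dbPhi (p q : A × Dual R A) : dbForm (dbPhi L p) (dbPhi L q) = dbForm p q := by
  simp [dbForm, dbPhi]

end DbPhi

section Double

variable (L : HomLieAlgebra K g) (Lst : HomLieAlgebra K (Dual K g))

@[simp] lemma dbBracket_inl_inl (x y : g) : dbBracket L Lst (x, 0) (y, 0) = (L.bracket x y, 0) := by
  simp [dbBracket]

@[simp] lemma dbBracket_inr_inr (ξ η : Dual K g) :
    dbBracket L Lst (0, ξ) (0, η) = (0, Lst.bracket ξ η) := by
  simp [dbBracket]

lemma dbBracket_skew (p q : g × Dual K g) : dbBracket L Lst p q = - dbBracket L Lst q p := by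
  apply Prod.ext
  · simp only [dbBracket, Prod.fst_neg, L.skew p.1 q.1]
    abel
  · simp only [dbBracket, Prod.snd_neg, Lst.skew p.2 q.2]
    abel

lemma dbBracket_add_left (p p' q : g × Dual K g) :
    dbBracket L Lst (p + p') q = dbBracket L Lst p q + dbBracket L Lst p' q := by
  ext <;> simp [dbBracket, coadRep_add_left, coadRep_add_right, coadRepStar_add_left,
    coadRepStar_add_right] <;> abel

lemma dbBracket_add_right (p q q' : g × Dual K g) :
    dbBracket L Lst p (q + q') = dbBracket L Lst p q + dbBracket L Lst p q' := by
  rw [dbBracket_skew, dbBracket_add_left, neg_add, ← dbBracket_skew, ← dbBracket_skew]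

noncomputable def dbJacobiator (p q r : g × Dual K g) : g × Dual K g :=
  dbBracket L Lst (dbPhi L p) (dbBracket L Lst q r)
    + dbBracket L Lst (dbPhi L q) (dbBracket L Lst r p)
    + dbBracket L Lst (dbPhi L r) (dbBracket L Lst p q)

lemma dbJacobiator_rotate (p q r : g × Dual K g) :
    dbJacobiator L Lst p q r = dbJacobiator L Lst q r p := by
  simp only [dbJacobiator]
  abel

lemma dbJacobiator_add_left (p p' q r : g × Dual K g) :
    dbJacobiator L Lst (p + p') q r = dbJacobiator L Lst p q r + dbJacobiator L Lst p' q r := by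
  simp only [dbJacobiator, dbPhi_add, dbBracket_add_left, dbBracket_add_right]
  abel

lemma dbJacobiator_add_middle (p q q' r : g × Dual K g) :
    dbJacobiator L Lst p (q + q') r = dbJacobiator L Lst p q r + dbJacobiator L Lst p q' r := by
  simp only [dbJacobiator_rotate L Lst p, dbJacobiator_add_left]

lemma dbJacobiator_add_right (p q r r' : g × Dual K g) :
    dbJacobiator L Lst p q (r + r') = dbJacobiator L Lst p q r + dbJacobiator L Lst p q r' := by
  rw [← dbJacobiator_rotate L Lst (r + r'), dbJacobiator_add_left, dbJacobiator_rotate L Lst r,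
    dbJacobiator_rotate L Lst r']

end Double

section Jacobi

variable {L : HomLieAlgebra K g} {Lst : HomLieAlgebra K (Dual K g)}

lemma dbJacobiator_inl_inl_inl (x y z : g) : dbJacobiator L Lst (x, 0) (y, 0) (z, 0) = 0 := by
  simp [dbJacobiator, dbPhi, L.jacobi]

lemma dbJacobiator_inr_inr_inr (hphi : IsDualInverse L Lst) (ξ η ζ : Dual K g) :
    dbJacobiator L Lst (0, ξ) (0, η) (0, ζ) = 0 := by
  simp [dbJacobiator, dbPhi, hphi.comp_phi_symm, Lst.jacobi]

lemma dbJacobiator_inl_inl_inr (hphi : IsDualInverse L Lst) (hcoc : IsCobracketCocycle L Lst)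
    (x y : g) (ζ : Dual K g) : dbJacobiator L Lst (x, 0) (y, 0) (0, ζ) = 0 := by
  apply Prod.ext
  · simp [dbJacobiator, dbBracket, dbPhi, coadRepStar_cocycle hphi hcoc]
    abel
  · simp [dbJacobiator, dbBracket, dbPhi, coadRep_bracket]
    abel

lemma dbJacobiator_inl_inr_inr (hphi : IsDualInverse L Lst) (hcoc : IsCobracketCocycle L Lst)
    (x : g) (η ζ : Dual K g) : dbJacobiator L Lst (x, 0) (0, η) (0, ζ) = 0 := by
  apply Prod.ext
  · simp [dbJacobiator, dbBracket, dbPhi, hphi.coadRepStar_bracket]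
  · simp [dbJacobiator, dbBracket, dbPhi, coadRep_cocycle hphi hcoc]
    abel

lemma dbJacobiator_eq_zero (hphi : IsDualInverse L Lst) (hcoc : IsCobracketCocycle L Lst)
    (p q r : g × Dual K g) : dbJacobiator L Lst p q r = 0 := by
  have hGGS := dbJacobiator_inl_inl_inr hphi hcoc
  have hGSS := dbJacobiator_inl_inr_inr hphi hcoc
  have hGSG (x : g) (η : Dual K g) (z : g) : dbJacobiator L Lst (x, 0) (0, η) (z, 0) = 0 := by
    rw [← dbJacobiator_rotate, hGGS]
  have hSGG (ξ : Dual K g) (y z : g) : dbJacobiator L Lst (0, ξ) (y, 0) (z, 0) = 0 := by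
    rw [dbJacobiator_rotate, hGGS]
  have hSGS (ξ : Dual K g) (y : g) (ζ : Dual K g) :
      dbJacobiator L Lst (0, ξ) (y, 0) (0, ζ) = 0 := by
    rw [dbJacobiator_rotate, hGSS]
  have hSSG (ξ η : Dual K g) (z : g) : dbJacobiator L Lst (0, ξ) (0, η) (z, 0) = 0 := by
    rw [← dbJacobiator_rotate, hGSS]
  have split (u : g × Dual K g) : u = (u.1, 0) + (0, u.2) := by simp
  rw [split p, split q, split r]
  simp only [dbJacobiator_add_left, dbJacobiator_add_middle, dbJacobiator_add_right,
    dbJacobiator_inl_inl_inl, dbJacobiator_inr_inr_inr hphi, hGGS, hGSG, hSGG, hGSS, hSGS, hSSG,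
    add_zero]

end Jacobi

section Invariance

variable {L : HomLieAlgebra K g} {Lst : HomLieAlgebra K (Dual K g)}

lemma dbPhi_dbBracket (hphi : IsDualInverse L Lst) (p q : g × Dual K g) :
    dbPhi L (dbBracket L Lst p q) = dbBracket L Lst (dbPhi L p) (dbPhi L q) := by
  apply Prod.ext
  · simp [dbPhi, dbBracket, L.phi_bracket, hphi.phi_coadRepStar, hphi.comp_phi_symm]
  · simp only [dbPhi, dbBracket, add_comp, sub_comp, coadRep_comp_phi_symm]
    simp [hphi.comp_phi_symm, Lst.phi_bracket]

lemma dbForm_dbBracket_dbPhi (hphi : IsDualInverse L Lst) (p q r : g × Dual K g) :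
    dbForm (dbBracket L Lst p q) (dbPhi L r) = - dbForm (dbPhi L q) (dbBracket L Lst p r) := by
  simp [dbForm, dbBracket, dbPhi, hphi.comp_phi_symm, hphi.apply_coadRepStar, hphi.coadRep_eq,
    hphi.apply_phi, hphi.phi_symm_comp_bracket, Lst.phi_symm_bracket]
  rw [Lst.skew (Lst.phi.symm r.2), L.skew r.1]
  simp only [LinearMap.neg_apply, map_neg]
  ring

end Invariance

/-- if `(g,g*)` is a purely Hom-Lie bialgebra, then
`(g ⊕ g*, [·,·]_⋈, φ ⊕ (φ⁻¹)*, B)` is a quadratic Hom-Lie algebra and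
`(g ⊕ g*; g, g*)` is a Manin triple for Hom-Lie algebras. -/
theorem bialgebra_to_manin (L : HomLieAlgebra K g)
    (Lst : HomLieAlgebra K (Dual K g))
    (hphi : ∀ (ξ : Dual K g) (x : g), Lst.phi ξ x = ξ (L.phi.symm x))
    (hcompat : ∀ (x y : g) (ξ η : Dual K g),
      Lst.bracket ξ η (L.bracket x y)
        = adExt L (L.phi.symm x) (fun ξ' η' => Lst.bracket ξ' η' y) ξ η
          - adExt L (L.phi.symm y) (fun ξ' η' => Lst.bracket ξ' η' x) ξ η) :
    -- Hom-Lie algebra structure on the double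
    (∀ p q : g × Dual K g, dbBracket L Lst p q = - dbBracket L Lst q p) ∧
    (∀ p q : g × Dual K g,
      dbPhi L (dbBracket L Lst p q) = dbBracket L Lst (dbPhi L p) (dbPhi L q)) ∧
    (∀ p q r : g × Dual K g,
      dbBracket L Lst (dbPhi L p) (dbBracket L Lst q r)
        + dbBracket L Lst (dbPhi L q) (dbBracket L Lst r p)
        + dbBracket L Lst (dbPhi L r) (dbBracket L Lst p q) = 0) ∧
    -- the bilinear form is invariant (quadratic Hom-Lie algebra)
    (∀ p q r : g × Dual K g,
      dbForm (dbBracket L Lst p q) (dbPhi L r) = - dbForm (dbPhi L q) (dbBracket L Lst p r)) ∧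
    (∀ p q : g × Dual K g, dbForm (dbPhi L p) (dbPhi L q) = dbForm p q) ∧
    -- g and g* are isotropic Hom-Lie subalgebras
    (∀ x y : g, dbBracket L Lst (x, 0) (y, 0) = (L.bracket x y, 0)) ∧
    (∀ ξ η : Dual K g, dbBracket L Lst (0, ξ) (0, η) = (0, Lst.bracket ξ η)) ∧
    (∀ x y : g, dbForm ((x, 0) : g × Dual K g) ((y, 0) : g × Dual K g) = 0) ∧
    (∀ ξ η : Dual K g, dbForm ((0, ξ) : g × Dual K g) ((0, η) : g × Dual K g) = 0) :=
  ⟨dbBracket_skew L Lst, dbPhi_dbBracket hphi, dbJacobiator_eq_zero hphi hcompat,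
    dbForm_dbBracket_dbPhi hphi, dbForm_dbPhi L, dbBracket_inl_inl L Lst, dbBracket_inr_inr L Lst,
    fun _ _ => by simp [dbForm], fun _ _ => by simp [dbForm]⟩
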